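/- arXiv:2102.12303 — 4 statements merged into one kernel-verified Lean document; each statement's English description precedes it below -/
import Mathlib

section
/- If a real 3×3 matrix A satisfies ‖(adj A)·e₃‖ = ½ ‖A‖² (Euclidean norm on the vector, Frobenius norm on the matrix), then det A = 0. In particular, the inequality ‖(adj A)·e₃‖ ≤ ½‖A‖² is strict for every A with det A > 0. -/
/-- Frobenius norm of a real 3×3 matrix. -/
noncomputable def frob3 (A : Matrix (Fin 3) (Fin 3) ℝ) : ℝ :=
  Real.sqrt (∑ i, ∑ j, (A i j) ^ 2)

/-- Euclidean norm of a vector in ℝ³. -/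
noncomputable def enorm3 (x : Fin 3 → ℝ) : ℝ :=
  Real.sqrt (∑ i, (x i) ^ 2)

open Matrix in
set_option maxHeartbeats 1000000 in
lemma aux4 (A : Matrix (Fin 3) (Fin 3) ℝ) :
    ((∑ i, ((A.adjugate.mulVec (Pi.single (2:Fin 3) (1:ℝ))) i)^2) ≤
      (1/4) * (∑ i, ∑ j, (A i j)^2)^2) ∧
    ((∑ i, ((A.adjugate.mulVec (Pi.single (2:Fin 3) (1:ℝ))) i)^2) =
      (1/4) * (∑ i, ∑ j, (A i j)^2)^2 → A.det = 0) := by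
  simp [Matrix.adjugate_fin_three, Fin.sum_univ_three, Matrix.det_fin_three]
  set a := A 0 0; set b := A 0 1; set c := A 0 2
  set d := A 1 0; set e := A 1 1; set f := A 1 2
  set g := A 2 0; set h := A 2 1; set i := A 2 2
  have key : (4:ℝ)⁻¹ * (a^2+b^2+c^2 + (d^2+e^2+f^2) + (g^2+h^2+i^2))^2
      - ((b*f - c*e)^2 + (-(a*f) + c*d)^2 + (a*e - b*d)^2)
      = (1/4) * (a^2+b^2+c^2 - (d^2+e^2+f^2))^2 + (a*d+b*e+c*f)^2
        + (1/2) * ((g^2+h^2+i^2) * (a^2+b^2+c^2 + (d^2+e^2+f^2))) + (1/4) * (g^2+h^2+i^2)^2 := by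
    ring
  have n1 : (0:ℝ) ≤ (a^2+b^2+c^2 - (d^2+e^2+f^2))^2 := sq_nonneg _
  have n2 : (0:ℝ) ≤ (a*d+b*e+c*f)^2 := sq_nonneg _
  have n3 : (0:ℝ) ≤ (g^2+h^2+i^2) * (a^2+b^2+c^2 + (d^2+e^2+f^2)) := by positivity
  have n4 : (0:ℝ) ≤ (g^2+h^2+i^2)^2 := sq_nonneg _
  constructor
  · linarith
  · intro heq
    have hz2 : (g^2+h^2+i^2)^2 = 0 := by linarith
    have hz : g^2 + h^2 + i^2 = 0 := by
      exact pow_eq_zero_iff (n := 2) (by norm_num) |>.mp hz2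
    have hg2 : g^2 = 0 := by linarith [sq_nonneg g, sq_nonneg h, sq_nonneg i]
    have hh2 : h^2 = 0 := by linarith [sq_nonneg g, sq_nonneg h, sq_nonneg i]
    have hi2 : i^2 = 0 := by linarith [sq_nonneg g, sq_nonneg h, sq_nonneg i]
    have hg : g = 0 := pow_eq_zero_iff (n := 2) (by norm_num) |>.mp hg2
    have hh : h = 0 := pow_eq_zero_iff (n := 2) (by norm_num) |>.mp hh2
    have hi : i = 0 := pow_eq_zero_iff (n := 2) (by norm_num) |>.mp hi2
    rw [hg, hh, hi]; ring

lemma aux4' (A : Matrix (Fin 3) (Fin 3) ℝ) :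
    enorm3 ((Matrix.adjugate A).mulVec (Pi.single (2 : Fin 3) (1 : ℝ))) ≤
      (1 / 2) * (frob3 A) ^ 2 ∧
    (enorm3 ((Matrix.adjugate A).mulVec (Pi.single (2 : Fin 3) (1 : ℝ))) =
      (1 / 2) * (frob3 A) ^ 2 → A.det = 0) := by
  obtain ⟨hle, heq⟩ := aux4 A
  have hs : (0:ℝ) ≤ ∑ i, ∑ j, (A i j)^2 := by positivity
  have hfr : (frob3 A)^2 = ∑ i, ∑ j, (A i j)^2 := Real.sq_sqrt hs
  constructor
  · rw [enorm3, hfr]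
    calc Real.sqrt (∑ i, ((Matrix.adjugate A).mulVec (Pi.single (2:Fin 3) (1:ℝ)) i)^2)
        ≤ Real.sqrt ((1/4) * (∑ i, ∑ j, (A i j)^2)^2) := Real.sqrt_le_sqrt hle
      _ = (1/2) * (∑ i, ∑ j, (A i j)^2) := by
          rw [show (1/4 : ℝ) * (∑ i, ∑ j, (A i j)^2)^2 = ((1/2) * (∑ i, ∑ j, (A i j)^2))^2 by ring]
          exact Real.sqrt_sq (by positivity)
  · intro h
    apply heq
    have h2 : (0:ℝ) ≤ (1/2) * (∑ i, ∑ j, (A i j)^2) := by positivity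
    have : (∑ i, ((Matrix.adjugate A).mulVec (Pi.single (2:Fin 3) (1:ℝ)) i)^2) =
        ((1/2) * (∑ i, ∑ j, (A i j)^2))^2 := by
      have hv : (0:ℝ) ≤ ∑ i, ((Matrix.adjugate A).mulVec (Pi.single (2:Fin 3) (1:ℝ)) i)^2 := by
        positivity
      rw [← Real.sqrt_inj hv (by positivity), Real.sqrt_sq h2]
      rw [enorm3, hfr] at h
      exact h
    rw [this]; ring

/-- If ‖(adj A)·e₃‖ = ½‖A‖² then det A = 0; in particular the inequality
‖(adj A)·e₃‖ ≤ ½‖A‖² is strict whenever det A > 0. -/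
theorem stmt4 :
    (∀ A : Matrix (Fin 3) (Fin 3) ℝ,
      enorm3 ((Matrix.adjugate A).mulVec (Pi.single (2 : Fin 3) (1 : ℝ))) =
        (1 / 2) * (frob3 A) ^ 2 → A.det = 0) ∧
    (∀ A : Matrix (Fin 3) (Fin 3) ℝ, 0 < A.det →
      enorm3 ((Matrix.adjugate A).mulVec (Pi.single (2 : Fin 3) (1 : ℝ))) <
        (1 / 2) * (frob3 A) ^ 2) := by
  refine ⟨fun A => (aux4' A).2, fun A hd => ?_⟩
  obtain ⟨hle, heq⟩ := aux4' A
  exact lt_of_le_of_ne hle (fun h => hd.ne' (heq h))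
end

section
/- Let L : ℝ³ → ℝ³ be twice continuously differentiable and g : ℝ³ → ℝ³ be continuously differentiable. Define the vector field ḡ(y) = adj(DL(y)) · g(L(y)), where DL(y) is the Jacobian matrix of L at y. Then ḡ is continuously differentiable and, for every y ∈ ℝ³, div ḡ(y) = det(DL(y)) · (div g)(L(y)). -/
/-- Jacobian matrix of a map ℝ³ → ℝ³ at a point: entry (k,i) is ∂f_k/∂y_i. -/
noncomputable def jac3 (f : (Fin 3 → ℝ) → (Fin 3 → ℝ)) (y : Fin 3 → ℝ) :
    Matrix (Fin 3) (Fin 3) ℝ :=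
  Matrix.of fun k i => fderiv ℝ f y (Pi.single i 1) k

/-- Divergence of a vector field ℝ³ → ℝ³: ∑ᵢ ∂hᵢ/∂yᵢ. -/
noncomputable def div3 (h : (Fin 3 → ℝ) → (Fin 3 → ℝ)) (y : Fin 3 → ℝ) : ℝ :=
  ∑ i, fderiv ℝ h y (Pi.single i 1) i

lemma fderiv_proj_apply {n : ℕ} {F : (Fin n → ℝ) → (Fin n → ℝ)} {x : Fin n → ℝ}
    (hF : DifferentiableAt ℝ F x) (k : Fin n) (w : Fin n → ℝ) :
    fderiv ℝ (fun y => F y k) x w = fderiv ℝ F x w k := by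
  have h := (ContinuousLinearMap.proj (R := ℝ) (φ := fun _ : Fin n => ℝ) k).hasFDerivAt.comp x
    hF.hasFDerivAt
  have h2 : HasFDerivAt (fun y => F y k)
      ((ContinuousLinearMap.proj (R := ℝ) (φ := fun _ : Fin n => ℝ) k).comp (fderiv ℝ F x)) x := h
  rw [h2.fderiv]
  rfl

lemma clm_apply_eq_sum (T : (Fin 3 → ℝ) →L[ℝ] (Fin 3 → ℝ)) (v : Fin 3 → ℝ) (j : Fin 3) :
    T v j = ∑ m, v m * T (Pi.single m 1) j := by
  have hv : (∑ m, v m • (Pi.single m 1 : Fin 3 → ℝ)) = v := by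
    funext t
    simp [Fin.sum_univ_three, Pi.single_apply]
  conv_lhs => rw [← hv]
  simp [Finset.sum_apply]

lemma fderiv_helper {A B C D E F G H I J K M N O R : (Fin 3 → ℝ) → ℝ} {y w : Fin 3 → ℝ}
    (hA : DifferentiableAt ℝ A y) (hB : DifferentiableAt ℝ B y) (hC : DifferentiableAt ℝ C y)
    (hD : DifferentiableAt ℝ D y) (hE : DifferentiableAt ℝ E y) (hF : DifferentiableAt ℝ F y)
    (hG : DifferentiableAt ℝ G y) (hH : DifferentiableAt ℝ H y) (hI : DifferentiableAt ℝ I y)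
    (hJ : DifferentiableAt ℝ J y) (hK : DifferentiableAt ℝ K y) (hM : DifferentiableAt ℝ M y)
    (hN : DifferentiableAt ℝ N y) (hO : DifferentiableAt ℝ O y) (hR : DifferentiableAt ℝ R y) :
    fderiv ℝ (fun z => (A z * B z - C z * D z) * E z + (F z * G z - H z * I z) * J z
        + (K z * M z - N z * O z) * R z) y w
      = ((fderiv ℝ A y w * B y + A y * fderiv ℝ B y w)
          - (fderiv ℝ C y w * D y + C y * fderiv ℝ D y w)) * E y
        + (A y * B y - C y * D y) * fderiv ℝ E y w
        + ((fderiv ℝ F y w * G y + F y * fderiv ℝ G y w)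
          - (fderiv ℝ H y w * I y + H y * fderiv ℝ I y w)) * J y
        + (F y * G y - H y * I y) * fderiv ℝ J y w
        + ((fderiv ℝ K y w * M y + K y * fderiv ℝ M y w)
          - (fderiv ℝ N y w * O y + N y * fderiv ℝ O y w)) * R y
        + (K y * M y - N y * O y) * fderiv ℝ R y w := by
  have h := ((((hA.hasFDerivAt.mul hB.hasFDerivAt).sub
      (hC.hasFDerivAt.mul hD.hasFDerivAt)).mul hE.hasFDerivAt).add
    ((((hF.hasFDerivAt.mul hG.hasFDerivAt).sub
      (hH.hasFDerivAt.mul hI.hasFDerivAt)).mul hJ.hasFDerivAt).add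
    ((((hK.hasFDerivAt.mul hM.hasFDerivAt).sub
      (hN.hasFDerivAt.mul hO.hasFDerivAt)).mul hR.hasFDerivAt)))).fderiv
  have h2 : fderiv ℝ (fun z => (A z * B z - C z * D z) * E z + ((F z * G z - H z * I z) * J z
      + (K z * M z - N z * O z) * R z)) y w = _ := congrFun (congrArg _ h) w
  rw [show (fun z => (A z * B z - C z * D z) * E z + (F z * G z - H z * I z) * J z
      + (K z * M z - N z * O z) * R z) = (fun z => (A z * B z - C z * D z) * E z
      + ((F z * G z - H z * I z) * J z + (K z * M z - N z * O z) * R z)) by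
    funext z; ring]
  rw [h2]
  simp only [ContinuousLinearMap.add_apply, ContinuousLinearMap.coe_smul', Pi.smul_apply,
    smul_eq_mul, ContinuousLinearMap.coe_sub', Pi.sub_apply, Pi.mul_apply]
  ring

/-- If L is C² and g is C¹, then ḡ(y) = adj(DL(y))·g(L(y)) is C¹ and
div ḡ(y) = det(DL(y)) · (div g)(L(y)) for every y. -/
theorem stmt7 (L g : (Fin 3 → ℝ) → (Fin 3 → ℝ))
    (hL : ContDiff ℝ 2 L) (hg : ContDiff ℝ 1 g)
    (gbar : (Fin 3 → ℝ) → (Fin 3 → ℝ))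
    (hgbar : gbar = fun y => (Matrix.adjugate (jac3 L y)).mulVec (g (L y))) :
    ContDiff ℝ 1 gbar ∧
    ∀ y : Fin 3 → ℝ, div3 gbar y = (jac3 L y).det * div3 g (L y) := by
  have hL1 : ContDiff ℝ 1 L := hL.of_le one_le_two
  have hfd : ContDiff ℝ 1 (fderiv ℝ L) := hL.fderiv_right (by norm_num)
  have hP : ∀ i k : Fin 3, ContDiff ℝ 1 (fun y => fderiv ℝ L y (Pi.single i 1) k) := by
    intro i k
    exact contDiff_pi.1 (hfd.clm_apply contDiff_const) k
  have hGL : ∀ j : Fin 3, ContDiff ℝ 1 (fun y => g (L y) j) :=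
    fun j => contDiff_pi.1 (hg.comp hL1) j
  have hadj : ∀ k j : Fin 3, ContDiff ℝ 1 (fun y => Matrix.adjugate (jac3 L y) k j) := by
    intro k j
    fin_cases k <;> fin_cases j <;>
      simp only [Matrix.adjugate_fin_three, jac3, Matrix.of_apply, Matrix.cons_val',
        Matrix.cons_val_zero, Matrix.cons_val_one, Matrix.head_cons, Matrix.empty_val',
        Matrix.cons_val_fin_one, Matrix.head_fin_const, Matrix.cons_val_two, Matrix.tail_cons,
        Fin.isValue] <;>
      first
        | exact ((hP _ _).mul (hP _ _)).sub ((hP _ _).mul (hP _ _))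
        | exact (((hP _ _).mul (hP _ _)).neg).add ((hP _ _).mul (hP _ _))
  have hgbar1 : ContDiff ℝ 1 gbar := by
    rw [hgbar]
    apply contDiff_pi.2
    intro k
    have heq : (fun y => (Matrix.adjugate (jac3 L y)).mulVec (g (L y)) k)
        = fun y => ∑ j, Matrix.adjugate (jac3 L y) k j * g (L y) j := by
      funext y; simp [Matrix.mulVec, dotProduct]
    rw [heq]
    exact ContDiff.sum fun j _ => (hadj k j).mul (hGL j)
  refine ⟨hgbar1, fun y => ?_⟩
  -- differentiability atoms at y
  have hPd : ∀ i k : Fin 3, DifferentiableAt ℝ (fun z => fderiv ℝ L z (Pi.single i 1) k) y :=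
    fun i k => ((hP i k).differentiable one_ne_zero).differentiableAt
  have hGd : ∀ j : Fin 3, DifferentiableAt ℝ (fun z => g (L z) j) y :=
    fun j => ((hGL j).differentiable one_ne_zero).differentiableAt
  -- symmetry of second derivatives
  have hsymm : ∀ i j k : Fin 3,
      fderiv ℝ (fun z => fderiv ℝ L z (Pi.single i 1) k) y (Pi.single j 1)
        = fderiv ℝ (fun z => fderiv ℝ L z (Pi.single j 1) k) y (Pi.single i 1) := by
    intro i j k
    have hdF : ∀ i : Fin 3, DifferentiableAt ℝ (fun z => fderiv ℝ L z (Pi.single i 1)) y :=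
      fun i => (((hfd.clm_apply contDiff_const).differentiable one_ne_zero) y)
    have hstep : ∀ i j : Fin 3,
        fderiv ℝ (fun z => fderiv ℝ L z (Pi.single i 1) k) y (Pi.single j 1)
          = fderiv ℝ (fderiv ℝ L) y (Pi.single j 1) (Pi.single i 1) k := by
      intro i j
      rw [fderiv_proj_apply (hdF i) k (Pi.single j 1)]
      have := fderiv_clm_apply (c := fderiv ℝ L) (u := fun _ => (Pi.single i 1 : Fin 3 → ℝ))
        ((hfd.differentiable one_ne_zero) y) (differentiableAt_const _)
      rw [this]
      simp
    rw [hstep i j, hstep j i]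
    have hs := ((hL.contDiffAt (x := y)).isSymmSndFDerivAt (n := 2) (by simp [minSmoothness_of_isRCLikeNormedField]))
      (Pi.single j 1) (Pi.single i 1)
    rw [hs]
  -- chain rule values
  have hcval : ∀ k j : Fin 3,
      fderiv ℝ (fun z => g (L z) j) y (Pi.single k 1)
        = ∑ m, fderiv ℝ L y (Pi.single k 1) m * fderiv ℝ g (L y) (Pi.single m 1) j := by
    intro k j
    have hcomp := ((hg.differentiable one_ne_zero (L y)).hasFDerivAt.comp y
      ((hL1.differentiable one_ne_zero y).hasFDerivAt))
    have h2 : HasFDerivAt (fun z => g (L z) j)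
        ((ContinuousLinearMap.proj (R := ℝ) (φ := fun _ : Fin 3 => ℝ) j).comp
          ((fderiv ℝ g (L y)).comp (fderiv ℝ L y))) y := by
      have := (ContinuousLinearMap.proj (R := ℝ) (φ := fun _ : Fin 3 => ℝ) j).hasFDerivAt.comp y
        hcomp
      exact this
    rw [h2.fderiv]
    simp only [ContinuousLinearMap.coe_comp', Function.comp_apply,
      ContinuousLinearMap.proj_apply]
    exact clm_apply_eq_sum _ _ _
  -- divergence as sum over components
  have hdg : DifferentiableAt ℝ gbar y := (hgbar1.differentiable one_ne_zero).differentiableAt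
  have hdiv : div3 gbar y = ∑ k, fderiv ℝ (fun z => gbar z k) y (Pi.single k 1) := by
    unfold div3
    exact Finset.sum_congr rfl fun k _ => (fderiv_proj_apply hdg k _).symm
  rw [hdiv]
  -- explicit component functions
  have hrow0 : (fun z => gbar z 0) = (fun z =>
      (fderiv ℝ L z (Pi.single 1 1) 1 * fderiv ℝ L z (Pi.single 2 1) 2
        - fderiv ℝ L z (Pi.single 2 1) 1 * fderiv ℝ L z (Pi.single 1 1) 2) * g (L z) 0
      + (fderiv ℝ L z (Pi.single 2 1) 0 * fderiv ℝ L z (Pi.single 1 1) 2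
        - fderiv ℝ L z (Pi.single 1 1) 0 * fderiv ℝ L z (Pi.single 2 1) 2) * g (L z) 1
      + (fderiv ℝ L z (Pi.single 1 1) 0 * fderiv ℝ L z (Pi.single 2 1) 1
        - fderiv ℝ L z (Pi.single 2 1) 0 * fderiv ℝ L z (Pi.single 1 1) 1) * g (L z) 2) := by
    funext z
    simp only [hgbar, Matrix.mulVec, dotProduct, Matrix.adjugate_fin_three, jac3,
      Matrix.of_apply, Fin.sum_univ_three, Matrix.cons_val', Matrix.cons_val_zero,
      Matrix.cons_val_one, Matrix.head_cons, Matrix.empty_val', Matrix.cons_val_fin_one,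
      Matrix.head_fin_const, Matrix.cons_val_two, Matrix.tail_cons, Fin.isValue]
    ring
  have hrow1 : (fun z => gbar z 1) = (fun z =>
      (fderiv ℝ L z (Pi.single 2 1) 1 * fderiv ℝ L z (Pi.single 0 1) 2
        - fderiv ℝ L z (Pi.single 0 1) 1 * fderiv ℝ L z (Pi.single 2 1) 2) * g (L z) 0
      + (fderiv ℝ L z (Pi.single 0 1) 0 * fderiv ℝ L z (Pi.single 2 1) 2
        - fderiv ℝ L z (Pi.single 2 1) 0 * fderiv ℝ L z (Pi.single 0 1) 2) * g (L z) 1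
      + (fderiv ℝ L z (Pi.single 2 1) 0 * fderiv ℝ L z (Pi.single 0 1) 1
        - fderiv ℝ L z (Pi.single 0 1) 0 * fderiv ℝ L z (Pi.single 2 1) 1) * g (L z) 2) := by
    funext z
    simp only [hgbar, Matrix.mulVec, dotProduct, Matrix.adjugate_fin_three, jac3,
      Matrix.of_apply, Fin.sum_univ_three, Matrix.cons_val', Matrix.cons_val_zero,
      Matrix.cons_val_one, Matrix.head_cons, Matrix.empty_val', Matrix.cons_val_fin_one,
      Matrix.head_fin_const, Matrix.cons_val_two, Matrix.tail_cons, Fin.isValue]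
    ring
  have hrow2 : (fun z => gbar z 2) = (fun z =>
      (fderiv ℝ L z (Pi.single 0 1) 1 * fderiv ℝ L z (Pi.single 1 1) 2
        - fderiv ℝ L z (Pi.single 1 1) 1 * fderiv ℝ L z (Pi.single 0 1) 2) * g (L z) 0
      + (fderiv ℝ L z (Pi.single 1 1) 0 * fderiv ℝ L z (Pi.single 0 1) 2
        - fderiv ℝ L z (Pi.single 0 1) 0 * fderiv ℝ L z (Pi.single 1 1) 2) * g (L z) 1
      + (fderiv ℝ L z (Pi.single 0 1) 0 * fderiv ℝ L z (Pi.single 1 1) 1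
        - fderiv ℝ L z (Pi.single 1 1) 0 * fderiv ℝ L z (Pi.single 0 1) 1) * g (L z) 2) := by
    funext z
    simp only [hgbar, Matrix.mulVec, dotProduct, Matrix.adjugate_fin_three, jac3,
      Matrix.of_apply, Fin.sum_univ_three, Matrix.cons_val', Matrix.cons_val_zero,
      Matrix.cons_val_one, Matrix.head_cons, Matrix.empty_val', Matrix.cons_val_fin_one,
      Matrix.head_fin_const, Matrix.cons_val_two, Matrix.tail_cons, Fin.isValue]
    ring
  rw [Fin.sum_univ_three, hrow0, hrow1, hrow2]
  rw [fderiv_helper (hPd 1 1) (hPd 2 2) (hPd 2 1) (hPd 1 2) (hGd 0)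
    (hPd 2 0) (hPd 1 2) (hPd 1 0) (hPd 2 2) (hGd 1)
    (hPd 1 0) (hPd 2 1) (hPd 2 0) (hPd 1 1) (hGd 2)]
  rw [fderiv_helper (hPd 2 1) (hPd 0 2) (hPd 0 1) (hPd 2 2) (hGd 0)
    (hPd 0 0) (hPd 2 2) (hPd 2 0) (hPd 0 2) (hGd 1)
    (hPd 2 0) (hPd 0 1) (hPd 0 0) (hPd 2 1) (hGd 2)]
  rw [fderiv_helper (hPd 0 1) (hPd 1 2) (hPd 1 1) (hPd 0 2) (hGd 0)
    (hPd 1 0) (hPd 0 2) (hPd 0 0) (hPd 1 2) (hGd 1)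
    (hPd 0 0) (hPd 1 1) (hPd 1 0) (hPd 0 1) (hGd 2)]
  rw [hcval 0 0, hcval 0 1, hcval 0 2, hcval 1 0, hcval 1 1, hcval 1 2,
    hcval 2 0, hcval 2 1, hcval 2 2]
  simp only [hsymm 1 0 0, hsymm 1 0 1, hsymm 1 0 2, hsymm 2 0 0, hsymm 2 0 1, hsymm 2 0 2,
    hsymm 2 1 0, hsymm 2 1 1, hsymm 2 1 2]
  simp only [jac3, div3, Matrix.det_fin_three, Matrix.of_apply, Fin.sum_univ_three]
  ring
end

section
/- Let U ⊆ (0,∞) × ℝ be open, let v = (v₁,v₂) : U → ℝ² and define u on {x ∈ ℝ³ : ρ(x) > 0, (ρ(x),x₃) ∈ U}, where ρ(x) = √(x₁²+x₂²), by u(x) = (v₁(ρ(x),x₃) x₁/ρ(x), v₁(ρ(x),x₃) x₂/ρ(x), v₂(ρ(x),x₃)). If v is differentiable at (r,x₃) ∈ U, then for every point x with ρ(x) = r and third coordinate x₃ one has ‖Du(x)‖² = ‖Dv(r,x₃)‖² + (v₁(r,x₃)/r)², where ‖·‖ denotes the Frobenius norm of the Jacobian matrices. -/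
abbrev P3 (i : Fin 3) : (Fin 3 → ℝ) →L[ℝ] ℝ := ContinuousLinearMap.proj i

/-- ρ(x) = √(x₁² + x₂²). -/
noncomputable def rho3 (x : Fin 3 → ℝ) : ℝ :=
  Real.sqrt ((x 0) ^ 2 + (x 1) ^ 2)

/-- The axisymmetric extension of a planar map v = (v₁,v₂). -/
noncomputable def axext (v : ℝ × ℝ → ℝ × ℝ) (x : Fin 3 → ℝ) : Fin 3 → ℝ :=
  ![(v (rho3 x, x 2)).1 * x 0 / rho3 x,
    (v (rho3 x, x 2)).1 * x 1 / rho3 x,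
    (v (rho3 x, x 2)).2]

/-- Frobenius norm of the 3×3 Jacobian matrix of f at x. -/
noncomputable def frobJac3 (f : (Fin 3 → ℝ) → (Fin 3 → ℝ)) (x : Fin 3 → ℝ) : ℝ :=
  Real.sqrt (∑ k, ∑ i, (fderiv ℝ f x (Pi.single i 1) k) ^ 2)

/-- Frobenius norm of the 2×2 Jacobian matrix of v = (v₁,v₂) at p. -/
noncomputable def frobJac2 (v : ℝ × ℝ → ℝ × ℝ) (p : ℝ × ℝ) : ℝ :=
  Real.sqrt ((fderiv ℝ v p (1, 0)).1 ^ 2 + (fderiv ℝ v p (1, 0)).2 ^ 2 +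
    (fderiv ℝ v p (0, 1)).1 ^ 2 + (fderiv ℝ v p (0, 1)).2 ^ 2)

set_option maxRecDepth 10000 in
/-- If v is differentiable at (r,x₃) ∈ U ⊆ (0,∞) × ℝ (U open), then for every x with
ρ(x) = r and x₃-coordinate x₃, ‖Du(x)‖² = ‖Dv(r,x₃)‖² + (v₁(r,x₃)/r)² (Frobenius norms). -/
theorem stmt10 (U : Set (ℝ × ℝ)) (hUopen : IsOpen U) (hUpos : ∀ p ∈ U, 0 < p.1)
    (v : ℝ × ℝ → ℝ × ℝ) (r x₃ : ℝ) (hmem : (r, x₃) ∈ U)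
    (hv : DifferentiableAt ℝ v (r, x₃))
    (x : Fin 3 → ℝ) (hx : rho3 x = r) (hx3 : x 2 = x₃) :
    (frobJac3 (axext v) x) ^ 2 = (frobJac2 v (r, x₃)) ^ 2 + ((v (r, x₃)).1 / r) ^ 2 := by
  have hr : 0 < r := hUpos _ hmem
  have hrne : r ≠ 0 := hr.ne'
  have hsx : Real.sqrt (x 0 ^ 2 + x 1 ^ 2) = r := hx
  have hr2 : x 0 ^ 2 + x 1 ^ 2 = r ^ 2 := by
    have h := Real.sq_sqrt (by positivity : (0:ℝ) ≤ x 0 ^ 2 + x 1 ^ 2)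
    rw [hsx] at h; linarith
  have hne : x 0 ^ 2 + x 1 ^ 2 ≠ 0 := by rw [hr2]; positivity
  have hrhone : rho3 x ≠ 0 := by rw [hx]; exact hrne
  -- projections
  have hp0 : HasFDerivAt (fun y : Fin 3 → ℝ => y 0) (P3 0) x := by
    exact hasFDerivAt_apply 0 x
  have hp1 : HasFDerivAt (fun y : Fin 3 → ℝ => y 1) (P3 1) x := by
    exact hasFDerivAt_apply 1 x
  have hp2 : HasFDerivAt (fun y : Fin 3 → ℝ => y 2) (P3 2) x := by
    exact hasFDerivAt_apply 2 x
  -- derivative of rho3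
  have hg : HasFDerivAt (fun y : Fin 3 → ℝ => y 0 ^ 2 + y 1 ^ 2)
      (x 0 • P3 0 + x 0 • P3 0 + (x 1 • P3 1 + x 1 • P3 1)) x := by
    have h := (hp0.mul hp0).add (hp1.mul hp1)
    have e : (fun y : Fin 3 → ℝ => y 0 ^ 2 + y 1 ^ 2) =
        ((fun y => y 0) * fun y => y 0) + (fun y => y 1) * fun y => y 1 := by
      funext y; simp [pow_two]
    rw [e]; exact h
  have hρ : HasFDerivAt rho3
      ((1 / (2 * r)) • (x 0 • P3 0 + x 0 • P3 0 + (x 1 • P3 1 + x 1 • P3 1))) x := by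
    have h := (Real.hasDerivAt_sqrt hne).comp_hasFDerivAt x hg
    rw [hsx] at h
    exact h
  set Lρ := (1 / (2 * r)) • (x 0 • P3 0 + x 0 • P3 0 + (x 1 • P3 1 + x 1 • P3 1)) with hLρ
  -- derivative of y ↦ (rho3 y, y 2)
  have hF : HasFDerivAt (fun y : Fin 3 → ℝ => (rho3 y, y 2)) (Lρ.prod (P3 2)) x := hρ.prodMk hp2
  -- derivative of v at (rho3 x, x 2)
  set Dv := fderiv ℝ v (r, x₃) with hDvdef
  have hvAt : HasFDerivAt v Dv (rho3 x, x 2) := by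
    rw [hx, hx3]; exact hv.hasFDerivAt
  have hvF : HasFDerivAt (fun y : Fin 3 → ℝ => v (rho3 y, y 2)) (Dv.comp (Lρ.prod (P3 2))) x :=
    hvAt.comp x hF
  -- inverse of rho3
  have hinv : HasFDerivAt (fun y : Fin 3 → ℝ => (rho3 y)⁻¹) ((-(rho3 x ^ 2)⁻¹) • Lρ) x :=
    (hasDerivAt_inv hrhone).comp_hasFDerivAt x hρ
  -- component derivatives
  have h0 : HasFDerivAt (fun y : Fin 3 → ℝ => (v (rho3 y, y 2)).1 * y 0 * (rho3 y)⁻¹) _ x :=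
    (hvF.fst.mul hp0).mul hinv
  have h1 : HasFDerivAt (fun y : Fin 3 → ℝ => (v (rho3 y, y 2)).1 * y 1 * (rho3 y)⁻¹) _ x :=
    (hvF.fst.mul hp1).mul hinv
  have h2 := hvF.snd
  -- rewrite components of axext
  have hc0 : (fun y => axext v y 0) = fun y : Fin 3 → ℝ => (v (rho3 y, y 2)).1 * y 0 * (rho3 y)⁻¹ := by
    funext y; simp [axext, div_eq_mul_inv]
  have hc1 : (fun y => axext v y 1) = fun y : Fin 3 → ℝ => (v (rho3 y, y 2)).1 * y 1 * (rho3 y)⁻¹ := by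
    funext y; simp [axext, div_eq_mul_inv]
  have hc2 : (fun y => axext v y 2) = fun y : Fin 3 → ℝ => (v (rho3 y, y 2)).2 := by
    funext y; simp [axext]
  have hdiff : ∀ i : Fin 3, DifferentiableAt ℝ (fun y => axext v y i) x := by
    intro i
    fin_cases i
    · show DifferentiableAt ℝ (fun y => axext v y 0) x
      rw [hc0]; exact h0.differentiableAt
    · show DifferentiableAt ℝ (fun y => axext v y 1) x
      rw [hc1]; exact h1.differentiableAt
    · show DifferentiableAt ℝ (fun y => axext v y 2) x
      rw [hc2]; exact h2.differentiableAt
  have hpi := fderiv_pi (𝕜 := ℝ) (φ := fun i (y : Fin 3 → ℝ) => axext v y i) (x := x) hdiff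
  rw [frobJac3, frobJac2]
  rw [Real.sq_sqrt (by positivity), Real.sq_sqrt (by positivity)]
  rw [hpi]
  simp only [ContinuousLinearMap.pi_apply, Fin.sum_univ_three]
  rw [hc0, hc1, hc2, h0.fderiv, h1.fderiv, h2.fderiv]
  -- decompose Dv
  have hDv : ∀ t u : ℝ, Dv (t, u) = t • Dv (1, 0) + u • Dv (0, 1) := by
    intro t u
    have : (t, u) = t • ((1:ℝ), (0:ℝ)) + u • ((0:ℝ), (1:ℝ)) := by
      simp [Prod.ext_iff]
    rw [this, map_add, map_smul, map_smul]
  simp only [ContinuousLinearMap.add_apply, ContinuousLinearMap.smul_apply,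
    ContinuousLinearMap.comp_apply, ContinuousLinearMap.prod_apply,
    ContinuousLinearMap.coe_fst', ContinuousLinearMap.coe_snd', P3,
    ContinuousLinearMap.proj_apply, smul_eq_mul, Pi.single_eq_same, Pi.single_eq_of_ne,
    ne_eq, Pi.mul_apply, hx, hx3]
  have s01 : (Pi.single 0 1 : Fin 3 → ℝ) 1 = 0 := Pi.single_eq_of_ne (by decide) _
  have s02 : (Pi.single 0 1 : Fin 3 → ℝ) 2 = 0 := Pi.single_eq_of_ne (by decide) _
  have s10 : (Pi.single 1 1 : Fin 3 → ℝ) 0 = 0 := Pi.single_eq_of_ne (by decide) _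
  have s12 : (Pi.single 1 1 : Fin 3 → ℝ) 2 = 0 := Pi.single_eq_of_ne (by decide) _
  have s20 : (Pi.single 2 1 : Fin 3 → ℝ) 0 = 0 := Pi.single_eq_of_ne (by decide) _
  have s21 : (Pi.single 2 1 : Fin 3 → ℝ) 1 = 0 := Pi.single_eq_of_ne (by decide) _
  have hL0 : Lρ (Pi.single 0 1) = x 0 / r := by
    rw [hLρ]
    simp only [ContinuousLinearMap.smul_apply, ContinuousLinearMap.add_apply,
      ContinuousLinearMap.proj_apply, smul_eq_mul, Pi.single_eq_same, s01]
    field_simp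
    ring
  have hL1 : Lρ (Pi.single 1 1) = x 1 / r := by
    rw [hLρ]
    simp only [ContinuousLinearMap.smul_apply, ContinuousLinearMap.add_apply,
      ContinuousLinearMap.proj_apply, smul_eq_mul, Pi.single_eq_same, s10]
    field_simp
    ring
  have hL2 : Lρ (Pi.single 2 1) = 0 := by
    rw [hLρ]
    simp only [ContinuousLinearMap.smul_apply, ContinuousLinearMap.add_apply,
      ContinuousLinearMap.proj_apply, smul_eq_mul, Pi.single_eq_same, s20, s21]
    ring
  simp only [hL0, hL1, hL2, s01, s02, s10, s12, s20, s21, Pi.single_eq_same]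
  have hA0 : Dv (x 0 / r, 0) = (x 0 / r) • Dv (1, 0) := by
    have h : ((x 0 / r : ℝ), (0:ℝ)) = (x 0 / r) • ((1:ℝ), (0:ℝ)) := by simp
    rw [h, map_smul]
  have hA1 : Dv (x 1 / r, 0) = (x 1 / r) • Dv (1, 0) := by
    have h : ((x 1 / r : ℝ), (0:ℝ)) = (x 1 / r) • ((1:ℝ), (0:ℝ)) := by simp
    rw [h, map_smul]
  rw [hA0, hA1, ← hDvdef]
  simp only [Prod.smul_fst, Prod.smul_snd, smul_eq_mul]
  field_simp
  linear_combination
    (2 * (v (r, x₃)).1 * r ^ 2 * (r * (Dv (1, 0)).1 - (v (r, x₃)).1) +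
      (r * (Dv (1, 0)).1 - (v (r, x₃)).1) ^ 2 * (x 0 ^ 2 + x 1 ^ 2 + r ^ 2) +
      r ^ 4 * ((Dv (1, 0)).2 ^ 2 + (Dv (0, 1)).1 ^ 2)) * hr2
end

section
/- (Lusin's condition (N⁻¹)) Let N ≥ 1, let Ω ⊆ ℝᴺ be open, and let u : Ω → ℝᴺ be a map which is differentiable at almost every x ∈ Ω with det Du(x) ≠ 0 for almost every x ∈ Ω. Then for every set A ⊆ ℝᴺ of Lebesgue measure zero, the preimage u⁻¹(A) has Lebesgue measure zero. -/
open MeasureTheory Set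
open scoped NNReal ENNReal

/-- The matrix appearing in the statement is the matrix of `fderiv ℝ u x` in the
standard basis, so its determinant is the determinant of the derivative. -/
lemma aux_det_eq {N : ℕ} (f : (Fin N → ℝ) →L[ℝ] (Fin N → ℝ)) :
    (Matrix.of fun k i => f (Pi.single i 1) k).det = f.det := by
  have : (Matrix.of fun k i => f (Pi.single i 1) k) =
      LinearMap.toMatrix (Pi.basisFun ℝ (Fin N)) (Pi.basisFun ℝ (Fin N)) (f : (Fin N → ℝ) →ₗ[ℝ] (Fin N → ℝ)) := by
    ext k i
    simp [LinearMap.toMatrix_apply]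
  rw [this, LinearMap.det_toMatrix]

/-- If `u` has derivative with nonzero determinant on a set `s` whose image is null,
then `s` is null. -/
lemma aux_null {N : ℕ} (s : Set (Fin N → ℝ)) (u : (Fin N → ℝ) → (Fin N → ℝ))
    (f' : (Fin N → ℝ) → (Fin N → ℝ) →L[ℝ] (Fin N → ℝ))
    (hf' : ∀ x ∈ s, HasFDerivWithinAt u (f' x) s x)
    (hdet : ∀ x ∈ s, (f' x).det ≠ 0)
    (A : Set (Fin N → ℝ)) (hA : volume A = 0) (hsA : s ⊆ u ⁻¹' A) :
    volume s = 0 := by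
  rcases eq_empty_or_nonempty s with rfl | hs
  · simp
  -- for each linear map `B` with nonzero determinant, choose `m B > 0` and `δ B > 0`
  -- such that approximating maps expand measure at least by `m B`.
  have choice : ∀ B : (Fin N → ℝ) →L[ℝ] (Fin N → ℝ), ∃ δ : ℝ≥0, 0 < δ ∧
      (B.det ≠ 0 → ∀ t : Set (Fin N → ℝ), ApproximatesLinearOn u B t δ →
        (Real.toNNReal |B.det| / 2 : ℝ≥0∞) * volume t ≤ volume (u '' t)) := by
    intro B
    by_cases hB : B.det = 0
    · exact ⟨1, one_pos, fun h => absurd h (not_not.2 hB)⟩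
    have hm : ((Real.toNNReal |B.det| / 2 : ℝ≥0) : ℝ≥0∞) < ENNReal.ofReal |B.det| := by
      have h0 : 0 < Real.toNNReal |B.det| := Real.toNNReal_pos.2 (abs_pos.2 hB)
      rw [ENNReal.ofReal, ENNReal.coe_lt_coe]
      exact NNReal.half_lt_self h0.ne'
    rcases ((mul_le_addHaar_image_of_lt_det volume B hm).and self_mem_nhdsWithin).exists
      with ⟨δ, h, h'⟩
    refine ⟨δ, h', fun _ t ht => ?_⟩
    simpa [ENNReal.coe_div] using h t u ht
  choose δ δpos hδ using choice
  obtain ⟨t, B, _, _, t_cover, ht, hB⟩ :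
      ∃ (t : ℕ → Set (Fin N → ℝ)) (B : ℕ → (Fin N → ℝ) →L[ℝ] (Fin N → ℝ)),
        Pairwise (Function.onFun Disjoint t) ∧ (∀ n, MeasurableSet (t n)) ∧ (s ⊆ ⋃ n, t n) ∧
          (∀ n, ApproximatesLinearOn u (B n) (s ∩ t n) (δ (B n))) ∧
            (s.Nonempty → ∀ n, ∃ y ∈ s, B n = f' y) :=
    exists_partition_approximatesLinearOn_of_hasFDerivWithinAt u s f' hf' δ
      (fun B => (δpos B).ne')
  have key : ∀ n, volume (s ∩ t n) = 0 := by
    intro n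
    obtain ⟨y, hy, hy'⟩ := hB hs n
    have hdn : (B n).det ≠ 0 := by rw [hy']; exact hdet y hy
    have h1 : (Real.toNNReal |(B n).det| / 2 : ℝ≥0∞) * volume (s ∩ t n)
        ≤ volume (u '' (s ∩ t n)) := hδ (B n) hdn _ (ht n)
    have h2 : volume (u '' (s ∩ t n)) = 0 := by
      apply measure_mono_null _ hA
      rintro _ ⟨x, hx, rfl⟩
      exact hsA hx.1
    rw [h2, nonpos_iff_eq_zero, mul_eq_zero] at h1
    rcases h1 with h1 | h1
    · exfalso
      apply hdn
      have : Real.toNNReal |(B n).det| = 0 := by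
        simpa [ENNReal.div_eq_zero_iff] using h1
      simpa [Real.toNNReal_eq_zero, abs_nonpos_iff] using this
    · exact h1
  refine le_antisymm ?_ (zero_le (a := volume s))
  calc volume s ≤ volume (⋃ n, s ∩ t n) := by
        apply measure_mono
        rw [← inter_iUnion]
        exact subset_inter Subset.rfl t_cover
    _ ≤ ∑' n, volume (s ∩ t n) := measure_iUnion_le _
    _ = 0 := by simp [key]

/-- Lusin's condition (N⁻¹): if u : Ω ⊆ ℝᴺ → ℝᴺ is differentiable a.e. in the open set Ω
with a.e. nonvanishing Jacobian determinant, then the preimage (within Ω) of every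
Lebesgue-null set is Lebesgue-null. -/
theorem stmt15 (N : ℕ) (hN : 1 ≤ N) (Ω : Set (Fin N → ℝ)) (hΩ : IsOpen Ω)
    (u : (Fin N → ℝ) → (Fin N → ℝ))
    (hu : ∀ᵐ x ∂(volume.restrict Ω), DifferentiableAt ℝ u x ∧
      (Matrix.of fun k i => fderiv ℝ u x (Pi.single i 1) k).det ≠ 0)
    (A : Set (Fin N → ℝ)) (hA : volume A = 0) :
    volume (Ω ∩ u ⁻¹' A) = 0 := by
  set P : (Fin N → ℝ) → Prop := fun x => DifferentiableAt ℝ u x ∧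
      (Matrix.of fun k i => fderiv ℝ u x (Pi.single i 1) k).det ≠ 0 with hP
  have hbad : volume ({x | ¬ P x} ∩ Ω) = 0 := by
    have := hu
    rw [ae_iff] at this
    rwa [Measure.restrict_apply' hΩ.measurableSet] at this
  have hgood : volume (Ω ∩ u ⁻¹' A ∩ {x | P x}) = 0 := by
    refine aux_null (Ω ∩ u ⁻¹' A ∩ {x | P x}) u (fun x => fderiv ℝ u x) ?_ ?_ A hA ?_
    · intro x hx
      exact (hx.2.1.hasFDerivAt).hasFDerivWithinAt
    · intro x hx
      have := hx.2.2
      rwa [aux_det_eq (fderiv ℝ u x)] at this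
    · exact fun x hx => hx.1.2
  have : Ω ∩ u ⁻¹' A ⊆ (Ω ∩ u ⁻¹' A ∩ {x | P x}) ∪ ({x | ¬ P x} ∩ Ω) := by
    intro x hx
    by_cases h : P x
    · exact Or.inl ⟨hx, h⟩
    · exact Or.inr ⟨h, hx.1⟩
  exact measure_mono_null this (by
    rw [measure_union_null_iff]; exact ⟨hgood, hbad⟩)
end
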